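/- arXiv:2004.03069 — 3 statements merged into one kernel-verified Lean document; each statement's English description precedes it below -/
import Mathlib

section
/- Let ζ be a real random variable with continuous CDF F, and let ζ₁,...,ζₙ be i.i.d. copies of ζ. Fix α ∈ (0,1) and αₙ ∈ (α, 1). Then P(F_n^{-1}(αₙ) < F^{-1}(α)) = Σ_{i=0}^{n - ⌈n αₙ⌉} C(n,i) (1-α)^i α^{n-i}, i.e., the probability that the empirical αₙ-quantile undershoots the true α-quantile equals a lower binomial tail with parameters n and 1-α. -/
/-!
Write `q = F⁻¹(α)` and `k = ⌈n αₙ⌉`. Since the empirical CDF jumps by `1/n` at each sample point,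
`F_n⁻¹(αₙ) < q` holds exactly when at least `k` of the `ζᵢ` lie below `q`, i.e. when at most
`n - k` of them lie in `[q, ∞)`. Continuity of `F` gives `F q = α` and `P(ζᵢ < q) = F q`, so each
`ζᵢ` lands in `[q, ∞)` with probability `1 - α`, and by independence the number that do is
binomial with parameters `n` and `1 - α`.
-/

open MeasureTheory ProbabilityTheory

/-- The empirical distribution function `F_n(z) = (1/n) ∑ᵢ 1{ζᵢ ≤ z}`. -/
noncomputable def empCDF (n : ℕ) (ζ : Fin n → ℝ) (z : ℝ) : ℝ :=
  ((Finset.univ.filter (fun i => ζ i ≤ z)).card : ℝ) / n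

/-- The empirical quantile function `F_n^{-1}(γ) = inf {z | F_n(z) ≥ γ}`. -/
noncomputable def empQuantile (n : ℕ) (ζ : Fin n → ℝ) (γ : ℝ) : ℝ :=
  sInf {z : ℝ | γ ≤ empCDF n ζ z}

open Finset

theorem Monotone.apply_sInf_setOf_le_eq {F : ℝ → ℝ} (hmono : Monotone F)
    (hcont : Continuous F) {α a b : ℝ} (ha : F a < α) (hb : α ≤ F b) :
    F (sInf {z | α ≤ F z}) = α := by
  set S := {z | α ≤ F z}
  have hbdd : BddBelow S :=
    ⟨a, fun z hz => le_of_not_gt fun hza => (hz.trans (hmono hza.le)).not_gt ha⟩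
  refine le_antisymm ?_ ((isClosed_le continuous_const hcont).csInf_mem ⟨b, hb⟩ hbdd)
  have hbelow : Set.Iio (sInf S) ⊆ {z | F z ≤ α} := fun z hz =>
    have hzS : z ∉ S := notMem_of_lt_csInf hz hbdd
    show F z ≤ α from (not_le.mp hzS).le
  exact (isClosed_le hcont continuous_const).closure_subset_iff.mpr hbelow
    (by rw [closure_Iio]; exact Set.mem_Iic.mpr le_rfl)

theorem measure_Iio_eq_ofReal_cdf (μ : Measure ℝ) [IsProbabilityMeasure μ] {x : ℝ}
    (hx : ContinuousWithinAt (cdf μ) (Set.Iio x) x) :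
    μ (Set.Iio x) = ENNReal.ofReal (cdf μ x) := by
  have h := (cdf μ).measure_Iio (tendsto_cdf_atBot μ) x
  rwa [measure_cdf, (monotone_cdf μ).continuousWithinAt_Iio_iff_leftLim_eq.mp hx, sub_zero] at h

theorem measure_Iio_sInf_cdf_eq (μ : Measure ℝ) [IsProbabilityMeasure μ]
    (hcont : Continuous (cdf μ)) {α : ℝ} (hα : α ∈ Set.Ioo 0 1) :
    μ (Set.Iio (sInf {z | α ≤ cdf μ z})) = ENNReal.ofReal α := by
  obtain ⟨a, ha⟩ := ((tendsto_cdf_atBot μ).eventually (eventually_lt_nhds hα.1)).exists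
  obtain ⟨b, hb⟩ := ((tendsto_cdf_atTop μ).eventually (eventually_gt_nhds hα.2)).exists
  rw [measure_Iio_eq_ofReal_cdf μ hcont.continuousWithinAt,
    (monotone_cdf μ).apply_sInf_setOf_le_eq hcont ha hb.le]

theorem le_empCDF_iff {n : ℕ} (hn : 0 < n) (g : Fin n → ℝ) (γ z : ℝ) :
    γ ≤ empCDF n g z ↔ ⌈n * γ⌉₊ ≤ #{i | g i ≤ z} := by
  rw [empCDF, le_div_iff₀ (Nat.cast_pos.mpr hn), mul_comm, Nat.ceil_le]

theorem Nat.ceil_natCast_mul_le_self (n : ℕ) {γ : ℝ} (hγ : γ ≤ 1) : ⌈n * γ⌉₊ ≤ n :=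
  Nat.ceil_le.mpr (mul_le_of_le_one_right n.cast_nonneg hγ)

theorem empQuantile_lt_iff {n : ℕ} (hn : 0 < n) (g : Fin n → ℝ) {γ : ℝ}
    (hγ : γ ∈ Set.Ioc 0 1) (q : ℝ) : empQuantile n g γ < q ↔ ⌈n * γ⌉₊ ≤ #{i | g i < q} := by
  have hk : 0 < ⌈n * γ⌉₊ := Nat.ceil_pos.mpr (mul_pos (Nat.cast_pos.mpr hn) hγ.1)
  set S := {z | γ ≤ empCDF n g z}
  obtain ⟨a, ha⟩ := (Set.finite_range g).bddBelow
  obtain ⟨b, hb⟩ := (Set.finite_range g).bddAbove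
  have hbS : b ∈ S := by
    rw [Set.mem_ofPred_eq, le_empCDF_iff hn, filter_true_of_mem
      fun i _ => hb (Set.mem_range_self i), card_univ, Fintype.card_fin]
    exact Nat.ceil_natCast_mul_le_self n hγ.2
  have hSbdd : BddBelow S := ⟨a, fun z hz => by
    obtain ⟨i, hi⟩ := card_pos.mp (hk.trans_le ((le_empCDF_iff hn g γ z).mp hz))
    exact (ha (Set.mem_range_self i)).trans (mem_filter.mp hi).2⟩
  constructor
  · intro h
    obtain ⟨z, hzS, hzq⟩ := exists_lt_of_csInf_lt ⟨b, hbS⟩ h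
    exact ((le_empCDF_iff hn g γ z).mp hzS).trans
      (card_le_card (monotone_filter_right _ fun i _ hi => hi.trans_lt hzq))
  · intro h
    obtain ⟨j, hj, hjmax⟩ := exists_max_image _ g (card_pos.mp (hk.trans_le h))
    have hjS : g j ∈ S := (le_empCDF_iff hn g γ (g j)).mpr (h.trans
      (card_le_card fun i hi => mem_filter.mpr ⟨mem_univ i, hjmax i hi⟩))
    exact (csInf_le hSbdd hjS).trans_lt (mem_filter.mp hj).2

theorem empQuantile_lt_iff_card_le {n : ℕ} (hn : 0 < n) (g : Fin n → ℝ) {γ : ℝ}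
    (hγ : γ ∈ Set.Ioc 0 1) (q : ℝ) :
    empQuantile n g γ < q ↔ #{i | q ≤ g i} ≤ n - ⌈n * γ⌉₊ := by
  have hsplit := card_filter_add_card_filter_not (s := univ) (fun i => g i < q)
  simp only [not_lt, card_univ, Fintype.card_fin] at hsplit
  have := Nat.ceil_natCast_mul_le_self n hγ.2
  rw [empQuantile_lt_iff hn g hγ]
  omega

section Binomial

variable {Ω ι β : Type*} [Fintype ι] {X : ι → Ω → β} {B : Set β} [DecidablePred (· ∈ B)]

theorem setOf_card_filter_mem_eq_biUnion (j : ℕ) :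
    {ω | #{i | X i ω ∈ B} = j} =
      ⋃ s ∈ powersetCard j univ, {ω | ({i | X i ω ∈ B} : Finset ι) = s} := by
  ext ω; simp

variable [DecidableEq ι]

theorem setOf_filter_mem_eq_iInter (s : Finset ι) :
    {ω | ({i | X i ω ∈ B} : Finset ι) = s} = ⋂ i, X i ⁻¹' (if i ∈ s then B else Bᶜ) := by
  ext ω
  simp only [Set.mem_ofPred_eq, Set.mem_iInter, Finset.ext_iff, mem_filter, mem_univ, true_and]
  refine forall_congr' fun i => ?_
  split_ifs with hi <;> simp [hi]

variable [MeasurableSpace Ω] [MeasurableSpace β] {P : Measure Ω}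

theorem measurableSet_setOf_filter_mem_eq (hX : ∀ i, Measurable (X i)) (hB : MeasurableSet B)
    (s : Finset ι) : MeasurableSet {ω | ({i | X i ω ∈ B} : Finset ι) = s} := by
  rw [setOf_filter_mem_eq_iInter]
  exact .iInter fun i => hX i (by split_ifs; exacts [hB, hB.compl])

theorem measure_setOf_filter_mem_eq (hindep : iIndepFun X P)
    (hB : MeasurableSet B) {p r : ENNReal} (hp : ∀ i, P (X i ⁻¹' B) = p)
    (hr : ∀ i, P (X i ⁻¹' Bᶜ) = r) (s : Finset ι) :
    P {ω | ({i | X i ω ∈ B} : Finset ι) = s} = p ^ #s * r ^ (Fintype.card ι - #s) := by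
  rw [setOf_filter_mem_eq_iInter,
    hindep.meas_iInter fun i => ⟨_, by split_ifs; exacts [hB, hB.compl], rfl⟩]
  have hfactor : ∀ i, P (X i ⁻¹' if i ∈ s then B else Bᶜ) = if i ∈ s then p else r :=
    fun i => by split_ifs; exacts [hp i, hr i]
  simp only [hfactor, prod_ite, prod_const, filter_mem_eq_inter, univ_inter, filter_not,
    card_univ_sdiff]

theorem measure_setOf_card_filter_mem_eq (hX : ∀ i, Measurable (X i)) (hindep : iIndepFun X P)
    (hB : MeasurableSet B) {p r : ENNReal} (hp : ∀ i, P (X i ⁻¹' B) = p)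
    (hr : ∀ i, P (X i ⁻¹' Bᶜ) = r) (j : ℕ) :
    P {ω | #{i | X i ω ∈ B} = j} =
      (Fintype.card ι).choose j * p ^ j * r ^ (Fintype.card ι - j) := by
  rw [setOf_card_filter_mem_eq_biUnion, measure_biUnion_finset, sum_congr rfl fun s hs => by
    rw [measure_setOf_filter_mem_eq hindep hB hp hr, (mem_powersetCard_univ.mp hs)]]
  · rw [sum_const, card_powersetCard, card_univ, nsmul_eq_mul, mul_assoc]
  · exact fun s _ t _ hst => Set.disjoint_left.mpr fun ω hs ht => hst (hs.symm.trans ht)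
  · exact fun s _ => measurableSet_setOf_filter_mem_eq hX hB s

theorem measure_setOf_card_filter_mem_le (hX : ∀ i, Measurable (X i)) (hindep : iIndepFun X P)
    (hB : MeasurableSet B) {p r : ENNReal} (hp : ∀ i, P (X i ⁻¹' B) = p)
    (hr : ∀ i, P (X i ⁻¹' Bᶜ) = r) (m : ℕ) :
    P {ω | #{i | X i ω ∈ B} ≤ m} =
      ∑ j ∈ range (m + 1), (Fintype.card ι).choose j * p ^ j * r ^ (Fintype.card ι - j) := by
  have hunion : {ω | #{i | X i ω ∈ B} ≤ m} =
      ⋃ j ∈ range (m + 1), {ω | #{i | X i ω ∈ B} = j} := by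
    ext ω; simp
  rw [hunion, measure_biUnion_finset]
  · exact sum_congr rfl fun j _ => measure_setOf_card_filter_mem_eq hX hindep hB hp hr j
  · exact fun j _ k _ hjk => Set.disjoint_left.mpr fun ω hj hk => hjk (hj.symm.trans hk)
  · intro j _
    rw [setOf_card_filter_mem_eq_biUnion]
    exact Finset.measurableSet_biUnion _ fun s _ => measurableSet_setOf_filter_mem_eq hX hB s

end Binomial

/-- For an i.i.d. sample with continuous CDF `F`, the probability that the empirical
`αₙ`-quantile undershoots the true `α`-quantile equals the lower binomial tail
`∑_{i=0}^{n-⌈nαₙ⌉} C(n,i) (1-α)ⁱ α^{n-i}`. -/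
theorem empQuantile_undershoot_prob
    {Ω : Type*} [MeasurableSpace Ω] (P : Measure Ω) [IsProbabilityMeasure P]
    (n : ℕ) (hn : 0 < n) (ζ : Fin n → Ω → ℝ) (hmeas : ∀ i, Measurable (ζ i))
    (hindep : iIndepFun ζ P)
    (μ : Measure ℝ) (hident : ∀ i, P.map (ζ i) = μ)
    (F : ℝ → ℝ) (hF : ∀ z, F z = (μ (Set.Iic z)).toReal) (hFcont : Continuous F)
    (α αn : ℝ) (hα : α ∈ Set.Ioo (0 : ℝ) 1) (hαn : αn ∈ Set.Ioo α 1) :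
    (P {ω | empQuantile n (fun i => ζ i ω) αn < sInf {z : ℝ | α ≤ F z}}).toReal =
      ∑ i ∈ Finset.range (n - ⌈(n : ℝ) * αn⌉₊ + 1),
        (n.choose i : ℝ) * (1 - α) ^ i * α ^ (n - i) := by
  have : IsProbabilityMeasure μ :=
    hident ⟨0, hn⟩ ▸ Measure.isProbabilityMeasure_map (hmeas _).aemeasurable
  obtain rfl : F = cdf μ := funext fun z => by rw [hF, cdf_eq_real, measureReal_def]
  set q := sInf {z | α ≤ cdf μ z}
  have hlaw : ∀ i s, MeasurableSet s → P (ζ i ⁻¹' s) = μ s := fun i s hs => by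
    rw [← Measure.map_apply (hmeas i) hs, hident i]
  have hIio : μ (Set.Iio q) = ENNReal.ofReal α := measure_Iio_sInf_cdf_eq μ hFcont hα
  have hIci : μ (Set.Ici q) = ENNReal.ofReal (1 - α) := by
    rw [← Set.compl_Iio, prob_compl_eq_one_sub measurableSet_Iio, hIio,
      ENNReal.ofReal_sub _ hα.1.le, ENNReal.ofReal_one]
  have hevent : {ω | empQuantile n (fun i => ζ i ω) αn < q} =
      {ω | #{i | ζ i ω ∈ Set.Ici q} ≤ n - ⌈(n : ℝ) * αn⌉₊} := by
    ext ω
    simp only [Set.mem_ofPred_eq, Set.mem_Ici]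
    exact empQuantile_lt_iff_card_le hn _ ⟨hα.1.trans hαn.1, hαn.2.le⟩ q
  rw [hevent, measure_setOf_card_filter_mem_le hmeas hindep measurableSet_Ici
    (fun i => (hlaw i _ measurableSet_Ici).trans hIci)
    (fun i => by rw [Set.compl_Ici, hlaw i _ measurableSet_Iio, hIio]), Fintype.card_fin,
    ENNReal.toReal_sum fun j _ => by finiteness]
  refine sum_congr rfl fun j _ => ?_
  simp [ENNReal.toReal_ofReal hα.1.le, ENNReal.toReal_ofReal (sub_nonneg.mpr hα.2.le)]
end

section
/- Let ζ be a real random variable with continuous CDF F, and ζ₁,...,ζₙ i.i.d. copies. Fix α ∈ (0,1), ε ∈ (0, 1-α), and αₙ ∈ (α, α+ε). Then P(F(F_n^{-1}(αₙ)) < α) ≤ exp(-n(αₙ - α)²/(2(1-α))). -/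
open MeasureTheory ProbabilityTheory

/-! On the event `F(F_n⁻¹(αₙ)) < α`, every sample point below the empirical quantile satisfies
`F(ζᵢ) < α`, so at least `n αₙ` of the independent events `{F(ζᵢ) < α}` occur, and by continuity
of `F` each has probability at most `α`. The Chernoff bound for such a count is
`exp(-n KL(αₙ ‖ α))`, and `KL(q ‖ p) ≥ (q - p)² / (2 (1 - p))` for `p ≤ q` follows from
`log y ≥ 1 - 1/y` and `log x ≤ sinh (log x)`. -/

open Real Finset

noncomputable def bernoulliKL (q p : ℝ) : ℝ :=
  q * log (q / p) + (1 - q) * log ((1 - q) / (1 - p))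

theorem sq_sub_div_le_bernoulliKL {p q : ℝ} (hp : 0 < p) (hpq : p ≤ q) (hq : q < 1) :
    (q - p) ^ 2 / (2 * (1 - p)) ≤ bernoulliKL q p := by
  have hq0 : 0 < q := hp.trans_le hpq
  have h1p : 0 < 1 - p := by linarith
  have h1q : 0 < 1 - q := by linarith
  set x := (1 - p) / (1 - q) with hx
  have hx0 : 0 < x := div_pos h1p h1q
  have hx1 : 0 ≤ log x := log_nonneg ((one_le_div h1q).2 (by linarith))
  have hfirst : q - p ≤ q * log (q / p) := by
    have := one_sub_inv_le_log_of_pos (div_pos hq0 hp)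
    rw [inv_div] at this
    calc q - p = q * (1 - p / q) := by field_simp
      _ ≤ q * log (q / p) := by gcongr
  have hsinh : log x ≤ (x - x⁻¹) / 2 := sinh_log hx0 ▸ self_le_sinh_iff.2 hx1
  have hsecond : -((1 - p) - (1 - q) ^ 2 / (1 - p)) / 2 ≤ (1 - q) * log ((1 - q) / (1 - p)) := by
    have hx' : (1 - q) * (x - x⁻¹) = (1 - p) - (1 - q) ^ 2 / (1 - p) := by
      rw [hx]; field_simp
    rw [show (1 - q) / (1 - p) = x⁻¹ by rw [hx, inv_div], log_inv]
    linarith [mul_le_mul_of_nonneg_left hsinh h1q.le]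
  unfold bernoulliKL
  have : (q - p) ^ 2 / (2 * (1 - p)) = (q - p) - ((1 - p) - (1 - q) ^ 2 / (1 - p)) / 2 := by
    field_simp
    ring
  linarith

theorem measureReal_cdf_lt_le (μ : Measure ℝ) [IsProbabilityMeasure μ]
    (hcont : Continuous (cdf μ)) {α : ℝ} (hα₀ : 0 ≤ α) (hα₁ : α < 1) :
    μ.real {x | cdf μ x < α} ≤ α := by
  set A := {x | cdf μ x < α}
  rcases A.eq_empty_or_nonempty with hA | hA
  · simpa [hA] using hα₀
  have hbdd : BddAbove A := by
    obtain ⟨M, hM⟩ := ((tendsto_cdf_atTop μ).eventually (eventually_gt_nhds hα₁)).exists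
    exact ⟨M, fun x hx => le_of_not_gt fun hMx => (hM.trans_le (monotone_cdf μ hMx.le)).not_gt hx⟩
  calc μ.real A ≤ μ.real (Set.Iic (sSup A)) := measureReal_mono fun x hx => le_csSup hbdd hx
    _ = cdf μ (sSup A) := (cdf_eq_real μ _).symm
    _ ≤ α := closure_lt_subset_le hcont continuous_const (csSup_mem_closure hA hbdd)

theorem le_empCDF_empQuantile {n : ℕ} (hn : 0 < n) (z : Fin n → ℝ) {γ : ℝ} (hγ : γ ≤ 1) :
    γ ≤ empCDF n z (empQuantile n z γ) := by
  set Q := empQuantile n z γ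
  obtain ⟨w₀, hw₀⟩ := (Set.finite_range z).bddAbove
  have hw₀γ : γ ≤ empCDF n z w₀ := by
    have : ({i | z i ≤ w₀} : Finset (Fin n)) = univ :=
      filter_true_of_mem fun i _ => hw₀ (Set.mem_range_self i)
    rwa [empCDF, this, card_univ, Fintype.card_fin, div_self (Nat.cast_pos.2 hn).ne']
  -- `empCDF` is constant on `[Q, min {z i | Q < z i})`, so its value at `Q` is attained nearby
  obtain ⟨w, hw, hwQ⟩ : ∃ w, γ ≤ empCDF n z w ∧ ∀ i, z i ≤ w → z i ≤ Q := by
    by_cases hT : ∀ i, z i ≤ Q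
    · exact ⟨w₀, hw₀γ, fun i _ => hT i⟩
    · obtain ⟨i₀, hi₀⟩ : ∃ i, Q < z i := by simpa using hT
      obtain ⟨j, hj, hjmin⟩ := ({i | Q < z i} : Finset (Fin n)).exists_min_image z
        ⟨i₀, mem_filter.2 ⟨mem_univ _, hi₀⟩⟩
      obtain ⟨w, hw, hwj⟩ := exists_lt_of_csInf_lt ⟨w₀, hw₀γ⟩ (mem_filter.1 hj).2
      refine ⟨w, hw, fun i hi => le_of_not_gt fun hQi => ?_⟩
      exact (hwj.trans_le (hjmin i (mem_filter.2 ⟨mem_univ _, hQi⟩))).not_ge hi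
  refine hw.trans ?_
  unfold empCDF
  gcongr ?_ / _
  exact_mod_cast card_le_card fun i => by simpa using hwQ i

theorem mul_le_card_filter_of_empQuantile {n : ℕ} (hn : 0 < n) (z : Fin n → ℝ) {γ α : ℝ}
    (hγ : γ ≤ 1) {F : ℝ → ℝ} (hF : Monotone F) (hQ : F (empQuantile n z γ) < α) :
    n * γ ≤ #{i | F (z i) < α} := by
  have hn' : (n : ℝ) ≠ 0 := (Nat.cast_pos.2 hn).ne'
  calc n * γ ≤ n * empCDF n z (empQuantile n z γ) := by
        gcongr; exact le_empCDF_empQuantile hn z hγ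
    _ = #{i | z i ≤ empQuantile n z γ} := mul_div_cancel₀ _ hn'
    _ ≤ #{i | F (z i) < α} := by
        gcongr with i
        exact fun hi => (hF hi).trans_lt hQ

section Chernoff

variable {Ω : Type*}

theorem exp_mul_indicator_one (S : Set Ω) (t : ℝ) :
    (fun ω => exp (t * S.indicator 1 ω)) = fun ω => S.indicator (fun _ => exp t - 1) ω + 1 := by
  funext ω
  by_cases hω : ω ∈ S <;> simp [hω]

variable [MeasurableSpace Ω] {P : Measure Ω}

theorem integrable_exp_mul_indicator_one [IsFiniteMeasure P] {S : Set Ω} (hS : MeasurableSet S)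
    (t : ℝ) : Integrable (fun ω => exp (t * S.indicator 1 ω)) P := by
  rw [exp_mul_indicator_one]
  exact ((integrable_const _).indicator hS).add (integrable_const 1)

theorem mgf_indicator_one [IsProbabilityMeasure P] {S : Set Ω} (hS : MeasurableSet S) (t : ℝ) :
    mgf (S.indicator 1) P t = 1 + P.real S * (exp t - 1) := by
  rw [mgf, exp_mul_indicator_one, integral_add ((integrable_const _).indicator hS)
    (integrable_const 1), integral_indicator_const _ hS, integral_const, probReal_univ]
  simp [add_comm]

open Classical in
theorem measureReal_card_filter_ge_le_exp_bernoulliKL {ι β : Type*} [Fintype ι] [MeasurableSpace β]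
    [IsProbabilityMeasure P] {X : ι → Ω → β} (hX : ∀ i, Measurable (X i))
    (hindep : iIndepFun X P) {A : Set β} (hA : MeasurableSet A) {p q : ℝ}
    (hpA : ∀ i, P.real (X i ⁻¹' A) ≤ p) (hp : 0 < p) (hpq : p ≤ q) (hq : q < 1) :
    P.real {ω | Fintype.card ι * q ≤ #{i | X i ω ∈ A}} ≤
      exp (-Fintype.card ι * bernoulliKL q p) := by
  set n := Fintype.card ι
  set Y : ι → Ω → ℝ := fun i => (X i ⁻¹' A).indicator 1
  have hYmeas : ∀ i, Measurable (Y i) := fun i => measurable_one.indicator (hX i hA)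
  have hY : iIndepFun Y P := hindep.comp (fun _ => A.indicator 1) fun _ =>
    measurable_one.indicator hA
  have hcount : ∀ ω, (#{i | X i ω ∈ A} : ℝ) = (∑ i, Y i) ω := by
    intro ω
    simp [Y, Finset.sum_apply, Set.indicator_apply, Finset.sum_boole]
  have hq0 : 0 < q := hp.trans_le hpq
  have h1q : 0 < 1 - q := by linarith
  set B := (1 - p) / (1 - q)
  have hB : 1 ≤ B := (one_le_div h1q).2 (by linarith)
  have hB' : B * (1 - q) = 1 - p := div_mul_cancel₀ _ h1q.ne'
  -- the optimal exponent in the Chernoff bound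
  set t := log (q / p) + log B
  have ht : 0 ≤ t := add_nonneg (log_nonneg ((one_le_div hp).2 hpq)) (log_nonneg hB)
  have hmgf : ∀ i, mgf (Y i) P t ≤ B := by
    intro i
    have het : exp t = q / p * B := by
      rw [exp_add, exp_log (by positivity), exp_log (by positivity)]
    have h1t : 1 ≤ exp t := one_le_exp ht
    calc mgf (Y i) P t = 1 + P.real (X i ⁻¹' A) * (exp t - 1) := mgf_indicator_one (hX i hA) t
      _ ≤ 1 + p * (exp t - 1) := by have := hpA i; gcongr
      _ = B := by rw [het]; field_simp; linear_combination -hB'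
  calc P.real {ω | n * q ≤ #{i | X i ω ∈ A}}
      = P.real {ω | n * q ≤ (∑ i, Y i) ω} := by simp_rw [hcount]
    _ ≤ exp (-t * (n * q)) * mgf (∑ i, Y i) P t :=
        measure_ge_le_exp_mul_mgf _ ht (hY.integrable_exp_mul_sum hYmeas
          fun i _ => integrable_exp_mul_indicator_one (hX i hA) t)
    _ ≤ exp (-t * (n * q)) * B ^ n := by
        rw [hY.mgf_sum hYmeas]
        gcongr
        calc ∏ i, mgf (Y i) P t ≤ ∏ _i : ι, B :=
              prod_le_prod (fun i _ => mgf_nonneg) fun i _ => hmgf i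
          _ = B ^ n := by simp [n]
    _ = exp (-n * bernoulliKL q p) := by
        have hlog : log ((1 - q) / (1 - p)) = -log B := by rw [← log_inv, inv_div]
        rw [← exp_log (by positivity : 0 < B), ← exp_nat_mul, ← exp_add]
        simp only [t, bernoulliKL, hlog]
        ring_nf

end Chernoff

/-- `P(F(F_n^{-1}(αₙ)) < α) ≤ exp(-n(αₙ - α)²/(2(1-α)))` for an i.i.d. sample with
continuous CDF `F`, `α ∈ (0,1)`, `ε ∈ (0,1-α)` and `αₙ ∈ (α, α+ε)`. -/
theorem mass_undershoot_bound
    {Ω : Type*} [MeasurableSpace Ω] (P : Measure Ω) [IsProbabilityMeasure P]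
    (n : ℕ) (hn : 0 < n) (ζ : Fin n → Ω → ℝ) (hmeas : ∀ i, Measurable (ζ i))
    (hindep : iIndepFun ζ P)
    (μ : Measure ℝ) (hident : ∀ i, P.map (ζ i) = μ)
    (F : ℝ → ℝ) (hF : ∀ z, F z = (μ (Set.Iic z)).toReal) (hFcont : Continuous F)
    (α ε αn : ℝ) (hα : α ∈ Set.Ioo (0 : ℝ) 1) (hε : ε ∈ Set.Ioo 0 (1 - α))
    (hαn : αn ∈ Set.Ioo α (α + ε)) :
    (P {ω | F (empQuantile n (fun i => ζ i ω) αn) < α}).toReal ≤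
      Real.exp (-(n : ℝ) * (αn - α) ^ 2 / (2 * (1 - α))) := by
  have hαn₁ : αn < 1 := by linarith [hαn.2, hε.2]
  have : IsProbabilityMeasure μ :=
    hident ⟨0, hn⟩ ▸ Measure.isProbabilityMeasure_map (hmeas _).aemeasurable
  obtain rfl : F = cdf μ := funext fun z => by rw [hF, cdf_eq_real, measureReal_def]
  set A := {x | cdf μ x < α}
  have hA : MeasurableSet A := (isOpen_lt hFcont continuous_const).measurableSet
  have hpA : ∀ i, P.real (ζ i ⁻¹' A) ≤ α := fun i => by
    rw [← map_measureReal_apply (hmeas i) hA, hident i]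
    exact measureReal_cdf_lt_le μ hFcont hα.1.le hα.2
  have hsub : {ω | cdf μ (empQuantile n (fun i => ζ i ω) αn) < α} ⊆
      {ω | Fintype.card (Fin n) * αn ≤ #{i | ζ i ω ∈ A}} := fun ω hω => by
    rw [Set.mem_ofPred_eq, Fintype.card_fin]
    refine (mul_le_card_filter_of_empQuantile hn _ hαn₁.le (monotone_cdf μ) hω).trans ?_
    exact_mod_cast card_le_card fun i hi => by simpa [A] using hi
  calc P.real {ω | cdf μ (empQuantile n (fun i => ζ i ω) αn) < α}
      ≤ exp (-Fintype.card (Fin n) * bernoulliKL αn α) :=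
        (measureReal_mono hsub).trans <|
          measureReal_card_filter_ge_le_exp_bernoulliKL hmeas hindep hA hpA hα.1 hαn.1.le hαn₁
    _ ≤ exp (-(n : ℝ) * (αn - α) ^ 2 / (2 * (1 - α))) := by
        rw [Fintype.card_fin, exp_le_exp, neg_mul, neg_mul, neg_div, neg_le_neg_iff, mul_div_assoc]
        gcongr
        exact sq_sub_div_le_bernoulliKL hα.1 hαn.1.le hαn₁
end

section
/- Let ζ have continuous CDF F, and let δ ∈ (0,1), α ∈ (0,1), ε ∈ (0, 1-α), λ ∈ (0,1). Set αₙ = α + λε. If n ≥ c(λ, α, ε)·(2/ε²)·ln(2/δ), where c(λ, α, ε) = max{(1-α)/λ², (α+ε)/(1-λ)²}, then P(α ≤ F(F_n^{-1}(αₙ)) ≤ α + ε) ≥ 1 - δ. -/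
open MeasureTheory ProbabilityTheory

/-!
Write `q` for the empirical `αₙ`-quantile. If `F q < α`, at least `n αₙ` samples lie at or below
`q`, so at most `n (1 - αₙ)` of them satisfy `α ≤ F ζᵢ`; if `α + ε < F q`, fewer than `n αₙ`
samples satisfy `F ζᵢ < α + ε`. As `F` is continuous, `F ζᵢ` is uniform on `[0, 1]`, so both
events are lower deviations, by `n λ ε` and `n (1 - λ) ε`, of binomial counts with means
`n (1 - α)` and `n (α + ε)`. The multiplicative Chernoff bound
`P(S ≤ n (ρ - h)) ≤ exp (-n h² / (2 ρ))`, which comes from `x log x ≥ (x² - 1) / 2` on `(0, 1]`,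
makes each of them at most `δ / 2` under the sample-size condition.
-/

open Real Set Filter Topology

lemma Real.sq_sub_one_div_two_le_mul_log {x : ℝ} (hx0 : 0 < x) (hx1 : x ≤ 1) :
    (x ^ 2 - 1) / 2 ≤ x * log x := by
  -- with `y = -log x ≥ 0` this is `y ≤ sinh y`, multiplied by `x`
  have hsinh : -log x ≤ sinh (-log x) := self_le_sinh_iff.2 (neg_nonneg.2 (log_nonpos hx0.le hx1))
  rw [sinh_eq, neg_neg, exp_neg, exp_log hx0] at hsinh
  have hinv : x * x⁻¹ = 1 := mul_inv_cancel₀ hx0.ne'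
  nlinarith [mul_le_mul_of_nonneg_left hsinh hx0.le]

lemma Real.exp_neg_mul_sq_div_le_half {N ρ h δ : ℝ} (hρ : 0 < ρ) (hh : 0 < h) (hδ : 0 < δ)
    (hN : ρ / h ^ 2 * 2 * log (2 / δ) ≤ N) : exp (-(N * h ^ 2 / (2 * ρ))) ≤ δ / 2 := by
  have hlog : log (2 / δ) ≤ N * h ^ 2 / (2 * ρ) := by
    rw [le_div_iff₀ (by positivity)]
    calc log (2 / δ) * (2 * ρ) = ρ / h ^ 2 * 2 * log (2 / δ) * h ^ 2 := by field_simp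
      _ ≤ N * h ^ 2 := by gcongr
  calc exp (-(N * h ^ 2 / (2 * ρ))) ≤ exp (-log (2 / δ)) := by gcongr
    _ = δ / 2 := by rw [exp_neg, exp_log (by positivity), inv_div]

section EmpiricalQuantile

variable {n : ℕ} (ξ : Fin n → ℝ) {F : ℝ → ℝ} {γ : ℝ}

lemma empCDF_eq_sum_indicator :
    empCDF n ξ = fun z => ∑ i, (Ici (ξ i)).indicator (fun _ => (n : ℝ)⁻¹) z := by
  ext z
  rw [empCDF, Finset.natCast_card_filter, div_eq_mul_inv, Finset.sum_mul]
  refine Finset.sum_congr rfl fun i _ => ?_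
  by_cases h : ξ i ≤ z <;> simp [h]

lemma upperSemicontinuous_empCDF : UpperSemicontinuous (empCDF n ξ) := by
  rw [empCDF_eq_sum_indicator]
  exact upperSemicontinuous_sum fun i _ =>
    isClosed_Ici.upperSemicontinuous_indicator (inv_nonneg.2 n.cast_nonneg)

lemma bddBelow_setOf_le_empCDF (hγ : 0 < γ) : BddBelow {z | γ ≤ empCDF n ξ z} := by
  obtain ⟨m, hm⟩ := (Set.finite_range ξ).bddBelow
  refine ⟨m, fun z hz => le_of_not_gt fun hzm => ?_⟩
  have hempty : Finset.univ.filter (fun i => ξ i ≤ z) = ∅ :=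
    Finset.filter_false_of_mem fun i _ => not_le.2 (hzm.trans_le (hm ⟨i, rfl⟩))
  simp only [mem_ofPred_eq, empCDF, hempty, Finset.card_empty, Nat.cast_zero, zero_div] at hz
  linarith

lemma empQuantile_mem (hn : 0 < n) (hγ0 : 0 < γ) (hγ1 : γ ≤ 1) :
    γ ≤ empCDF n ξ (empQuantile n ξ γ) := by
  obtain ⟨M, hM⟩ := (Set.finite_range ξ).bddAbove
  have hne : {z | γ ≤ empCDF n ξ z}.Nonempty := by
    refine ⟨M, ?_⟩
    have hall : Finset.univ.filter (fun i => ξ i ≤ M) = Finset.univ :=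
      Finset.filter_true_of_mem fun i _ => hM ⟨i, rfl⟩
    simp [empCDF, hall, (Nat.cast_pos.2 hn).ne', hγ1]
  exact ((upperSemicontinuous_empCDF ξ).isClosed_preimage γ).csInf_mem hne
    (bddBelow_setOf_le_empCDF ξ hγ0)

lemma empCDF_lt_of_lt_empQuantile {z : ℝ} (hγ : 0 < γ) (hz : z < empQuantile n ξ γ) :
    empCDF n ξ z < γ :=
  not_le.1 (notMem_of_lt_csInf (s := {z | γ ≤ empCDF n ξ z}) hz (bddBelow_setOf_le_empCDF ξ hγ))

lemma card_le_of_apply_empQuantile_lt (hF : Monotone F) (hn : 0 < n) (hγ0 : 0 < γ)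
    (hγ1 : γ ≤ 1) {c : ℝ} (hc : F (empQuantile n ξ γ) < c) :
    ((Finset.univ.filter fun i => c ≤ F (ξ i)).card : ℝ) ≤ n * (1 - γ) := by
  set q := empQuantile n ξ γ
  have hbelow : n * γ ≤ (Finset.univ.filter fun i => ξ i ≤ q).card := by
    have := empQuantile_mem ξ hn hγ0 hγ1
    rwa [empCDF, le_div_iff₀ (Nat.cast_pos.2 hn), mul_comm] at this
  have hsplit : ((Finset.univ.filter fun i => ξ i ≤ q).card : ℝ) +
      (Finset.univ.filter fun i => ¬ξ i ≤ q).card = n := by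
    exact_mod_cast (Finset.card_filter_add_card_filter_not _).trans (Finset.card_fin n)
  have hsub : Finset.univ.filter (fun i => c ≤ F (ξ i)) ⊆
      Finset.univ.filter fun i => ¬ξ i ≤ q := by
    intro i
    simp only [Finset.mem_filter, Finset.mem_univ, true_and]
    exact fun hci hiq => (hF hiq).trans_lt hc |>.not_ge hci
  have habove : ((Finset.univ.filter fun i => c ≤ F (ξ i)).card : ℝ) ≤
      (Finset.univ.filter fun i => ¬ξ i ≤ q).card := by exact_mod_cast Finset.card_le_card hsub
  linarith

lemma card_le_of_lt_apply_empQuantile (hF : Monotone F) (hγ : 0 < γ) {b : ℝ}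
    (hb : F b < F (empQuantile n ξ γ)) :
    ((Finset.univ.filter fun i => F (ξ i) < F b).card : ℝ) ≤ n * γ := by
  have hlt := empCDF_lt_of_lt_empQuantile ξ hγ (hF.reflect_lt hb)
  rw [empCDF] at hlt
  have hsub : Finset.univ.filter (fun i => F (ξ i) < F b) ⊆
      Finset.univ.filter fun i => ξ i ≤ b := by
    intro i
    simp only [Finset.mem_filter, Finset.mem_univ, true_and]
    exact fun h => (hF.reflect_lt h).le
  rcases n.eq_zero_or_pos with rfl | hn
  · simp
  calc ((Finset.univ.filter fun i => F (ξ i) < F b).card : ℝ)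
      ≤ (Finset.univ.filter fun i => ξ i ≤ b).card := by exact_mod_cast Finset.card_le_card hsub
    _ ≤ n * γ := by
      rw [div_lt_iff₀ (Nat.cast_pos.2 hn)] at hlt
      linarith

end EmpiricalQuantile

namespace ProbabilityTheory

variable {μ : Measure ℝ}

lemma exists_cdf_eq (hcont : Continuous (cdf μ)) {c : ℝ} (hc : c ∈ Ioo 0 1) : ∃ b, cdf μ b = c :=
  mem_range_of_exists_le_of_exists_ge hcont
    ((tendsto_cdf_atBot μ).eventually (eventually_le_nhds hc.1)).exists
    ((tendsto_cdf_atTop μ).eventually (eventually_ge_nhds hc.2)).exists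

variable [IsProbabilityMeasure μ]

lemma measureReal_Iio_eq_cdf (hcont : Continuous (cdf μ)) (b : ℝ) : μ.real (Iio b) = cdf μ b := by
  have h := (cdf μ).measure_Iio (tendsto_cdf_atBot μ) b
  rw [measure_cdf, hcont.continuousWithinAt.leftLim_eq, sub_zero] at h
  rw [measureReal_def, h, ENNReal.toReal_ofReal (cdf_nonneg μ b)]

lemma measureReal_cdf_lt (hcont : Continuous (cdf μ)) {c : ℝ} (hc : c ∈ Ioo 0 1) :
    μ.real {x | cdf μ x < c} = c := by
  set T := {x | c ≤ cdf μ x}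
  have hT_ne : T.Nonempty := ((tendsto_cdf_atTop μ).eventually (eventually_ge_nhds hc.2)).exists
  obtain ⟨M, hM⟩ := eventually_atBot.1 ((tendsto_cdf_atBot μ).eventually (eventually_lt_nhds hc.1))
  have hT_bdd : BddBelow T := ⟨M, fun x hx => le_of_not_gt fun hxM => (hM x hxM.le).not_ge hx⟩
  set b := sInf T
  have hb_ge : c ≤ cdf μ b := (isClosed_le continuous_const hcont).csInf_mem hT_ne hT_bdd
  have hlt_b : ∀ x < b, cdf μ x < c := fun x hx => not_le.1 (notMem_of_lt_csInf (s := T) hx hT_bdd)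
  have hb_le : cdf μ b ≤ c :=
    le_of_tendsto (hcont.continuousAt.tendsto.mono_left nhdsWithin_le_nhds)
      (eventually_nhdsWithin_of_forall (s := Iio b) fun x hx => (hlt_b x hx).le)
  have hset : {x | cdf μ x < c} = Iio b := by
    ext x
    refine ⟨fun hx => mem_Iio.2 (not_le.1 fun hbx => ?_), hlt_b x⟩
    exact (hb_ge.trans (monotone_cdf μ hbx)).not_gt hx
  rw [hset, measureReal_Iio_eq_cdf hcont, le_antisymm hb_le hb_ge]

variable {Ω : Type*} [MeasurableSpace Ω] {P : Measure Ω}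

lemma iIndepFun.iIndepSet_preimage {ι β : Type*} [MeasurableSpace β] {X : ι → Ω → β}
    (hX : iIndepFun X P) (hmeas : ∀ i, Measurable (X i)) {B : Set β} (hB : MeasurableSet B) :
    iIndepSet (fun i => X i ⁻¹' B) P :=
  (iIndepSet_iff_meas_biInter fun i => hmeas i hB).2 fun s =>
    iIndepFun_iff_measure_inter_preimage_eq_mul.1 hX s fun _ _ => hB

variable [IsProbabilityMeasure P]

lemma mgf_indicator_one {S : Set Ω} (hS : MeasurableSet S) (t : ℝ) :
    mgf (S.indicator fun _ => (1 : ℝ)) P t = 1 + P.real S * (exp t - 1) := by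
  have hexp : (fun ω => exp (t * S.indicator (fun _ => (1 : ℝ)) ω)) =
      fun ω => S.indicator (fun _ => exp t - 1) ω + 1 := by
    ext ω
    by_cases hω : ω ∈ S <;> simp [hω]
  rw [mgf, hexp, integral_add ((integrable_const _).indicator hS) (integrable_const 1),
    integral_indicator_const _ hS, integral_const, probReal_univ, smul_eq_mul, smul_eq_mul]
  ring

lemma mgf_indicator_one_le {S : Set Ω} (hS : MeasurableSet S) {ρ t : ℝ} (hρ : ρ ≤ P.real S)
    (ht : t ≤ 0) : mgf (S.indicator fun _ => (1 : ℝ)) P t ≤ exp (ρ * (exp t - 1)) := by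
  rw [mgf_indicator_one hS]
  have hexp : exp t - 1 ≤ 0 := by linarith [exp_le_one_iff.2 ht]
  linarith [mul_le_mul_of_nonpos_right hρ hexp, add_one_le_exp (ρ * (exp t - 1))]

open Classical in
theorem iIndepSet.measureReal_card_le_le {ι : Type*} [Fintype ι] {S : ι → Set Ω}
    (hS : ∀ i, MeasurableSet (S i)) (hindep : iIndepSet S P) {ρ h : ℝ}
    (hρ : ∀ i, ρ ≤ P.real (S i)) (hh : 0 ≤ h) (hhρ : h < ρ) :
    P.real {ω | ((Finset.univ.filter fun i => ω ∈ S i).card : ℝ) ≤ Fintype.card ι * (ρ - h)} ≤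
      exp (-(Fintype.card ι * h ^ 2 / (2 * ρ))) := by
  set N : ℝ := (Fintype.card ι : ℝ)
  set X : ι → Ω → ℝ := fun i => (S i).indicator fun _ => 1
  have hρ0 : 0 < ρ := hh.trans_lt hhρ
  -- the optimal exponent: `exp t = 1 - h / ρ`
  set x := 1 - h / ρ
  have hx0 : 0 < x := sub_pos.2 ((div_lt_one hρ0).2 hhρ)
  have hx1 : x ≤ 1 := sub_le_self _ (div_nonneg hh hρ0.le)
  set t := log x
  have ht : t ≤ 0 := log_nonpos hx0.le hx1
  have hXmeas : ∀ i, Measurable (X i) := fun i => measurable_const.indicator (hS i)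
  have hXindep : iIndepFun X P := hindep.iIndepFun_indicator
  have hint : Integrable (fun ω => exp (t * (∑ i, X i) ω)) P := by
    refine hXindep.integrable_exp_mul_sum hXmeas fun i _ =>
      integrable_exp_mul_of_mem_Icc (a := 0) (b := 1) (hXmeas i).aemeasurable
        (ae_of_all _ fun ω => ?_)
    by_cases hω : ω ∈ S i <;> simp [X, hω]
  have hcard : ∀ ω, ((Finset.univ.filter fun i => ω ∈ S i).card : ℝ) = (∑ i, X i) ω := by
    intro ω
    simp [X, Finset.sum_apply, Set.indicator_apply]
  have hexponent : ρ * (exp t - 1) - t * (ρ - h) ≤ -(h ^ 2 / (2 * ρ)) := by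
    have hhx : h = ρ * (1 - x) := by simp only [x]; field_simp; ring
    have hρh : ρ - h = ρ * x := by rw [hhx]; ring
    rw [exp_log hx0, hρh, hhx]
    have := mul_le_mul_of_nonneg_left (sq_sub_one_div_two_le_mul_log hx0 hx1) hρ0.le
    field_simp
    nlinarith
  calc P.real {ω | ((Finset.univ.filter fun i => ω ∈ S i).card : ℝ) ≤ N * (ρ - h)}
      = P.real {ω | (∑ i, X i) ω ≤ N * (ρ - h)} := by simp_rw [hcard]
    _ ≤ exp (-t * (N * (ρ - h))) * mgf (∑ i, X i) P t := measure_le_le_exp_mul_mgf _ ht hint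
    _ = exp (-t * (N * (ρ - h))) * ∏ i, mgf (X i) P t := by rw [hXindep.mgf_sum hXmeas]
    _ ≤ exp (-t * (N * (ρ - h))) * ∏ _i : ι, exp (ρ * (exp t - 1)) := by
      gcongr with i
      · exact fun i _ => mgf_nonneg
      · exact mgf_indicator_one_le (hS i) (hρ i) ht
    _ = exp (N * (ρ * (exp t - 1) - t * (ρ - h))) := by
      rw [Finset.prod_const, Finset.card_univ, ← exp_nat_mul, ← exp_add]
      simp only [N]
      congr 1; ring
    _ ≤ exp (-(N * h ^ 2 / (2 * ρ))) := by
      gcongr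
      calc N * (ρ * (exp t - 1) - t * (ρ - h)) ≤ N * -(h ^ 2 / (2 * ρ)) :=
          mul_le_mul_of_nonneg_left hexponent (Nat.cast_nonneg _)
        _ = -(N * h ^ 2 / (2 * ρ)) := by ring

variable {n : ℕ} {ζ : Fin n → Ω → ℝ}

theorem measureReal_cdf_empQuantile_lt_le (hmeas : ∀ i, Measurable (ζ i))
    (hindep : iIndepFun ζ P) (hident : ∀ i, P.map (ζ i) = μ) (hcont : Continuous (cdf μ))
    (hn : 0 < n) {c γ : ℝ} (hc : c ∈ Ioo 0 1) (hγ : γ ∈ Ioo c 1) :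
    P.real {ω | cdf μ (empQuantile n (fun i => ζ i ω) γ) < c} ≤
      exp (-(n * (γ - c) ^ 2 / (2 * (1 - c)))) := by
  have hB : MeasurableSet {x | c ≤ cdf μ x} := measurableSet_le measurable_const hcont.measurable
  have hprob : ∀ i, 1 - c ≤ P.real (ζ i ⁻¹' {x | c ≤ cdf μ x}) := fun i => by
    have hcompl : {x | c ≤ cdf μ x} = {x | cdf μ x < c}ᶜ := by ext; simp
    rw [← map_measureReal_apply (hmeas i) hB, hident i, hcompl, probReal_compl_eq_one_sub
      (measurableSet_lt hcont.measurable measurable_const), measureReal_cdf_lt hcont hc]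
  have hchernoff := (hindep.iIndepSet_preimage hmeas hB).measureReal_card_le_le
    (fun i => hmeas i hB) hprob (h := γ - c) (by linarith [hγ.1]) (by linarith [hγ.2])
  rw [Fintype.card_fin] at hchernoff
  refine (measureReal_mono fun ω hω => ?_).trans hchernoff
  have := card_le_of_apply_empQuantile_lt (fun i => ζ i ω) (monotone_cdf μ) hn
    (hc.1.trans hγ.1) hγ.2.le hω
  simp only [mem_ofPred_eq, mem_preimage, sub_sub_sub_cancel_right]
  convert this

theorem measureReal_lt_cdf_empQuantile_le (hmeas : ∀ i, Measurable (ζ i))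
    (hindep : iIndepFun ζ P) (hident : ∀ i, P.map (ζ i) = μ) (hcont : Continuous (cdf μ))
    {c γ : ℝ} (hγ : γ ∈ Ioo 0 c) (hc : c < 1) :
    P.real {ω | c < cdf μ (empQuantile n (fun i => ζ i ω) γ)} ≤
      exp (-(n * (c - γ) ^ 2 / (2 * c))) := by
  have hc' : c ∈ Ioo 0 1 := ⟨hγ.1.trans hγ.2, hc⟩
  have hB : MeasurableSet {x | cdf μ x < c} := measurableSet_lt hcont.measurable measurable_const
  have hprob : ∀ i, c ≤ P.real (ζ i ⁻¹' {x | cdf μ x < c}) := fun i => by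
    rw [← map_measureReal_apply (hmeas i) hB, hident i, measureReal_cdf_lt hcont hc']
  have hchernoff := (hindep.iIndepSet_preimage hmeas hB).measureReal_card_le_le
    (fun i => hmeas i hB) hprob (h := c - γ) (by linarith [hγ.2]) (by linarith [hγ.1])
  rw [Fintype.card_fin, sub_sub_cancel] at hchernoff
  refine (measureReal_mono fun ω hω => ?_).trans hchernoff
  obtain ⟨b, rfl⟩ := exists_cdf_eq hcont hc'
  have := card_le_of_lt_apply_empQuantile (fun i => ζ i ω) (monotone_cdf μ) hγ.1 hω
  simp only [mem_ofPred_eq, mem_preimage]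
  convert this

lemma one_sub_add_le_measureReal_and {X : Ω → ℝ} {a b η₁ η₂ : ℝ}
    (ha : P.real {ω | X ω < a} ≤ η₁) (hb : P.real {ω | b < X ω} ≤ η₂) :
    1 - (η₁ + η₂) ≤ P.real {ω | a ≤ X ω ∧ X ω ≤ b} := by
  have hcover : univ ⊆ {ω | a ≤ X ω ∧ X ω ≤ b} ∪ {ω | X ω < a} ∪ {ω | b < X ω} := by
    intro ω _
    simp only [mem_union, mem_ofPred_eq]
    grind
  have := calc 1 = P.real univ := probReal_univ.symm
    _ ≤ _ := measureReal_mono hcover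
    _ ≤ _ := (measureReal_union_le _ _).trans (add_le_add (measureReal_union_le _ _) le_rfl)
  linarith

end ProbabilityTheory

/-- Finite-sample coverage guarantee: with `αₙ = α + λε` and
`n ≥ c(λ,α,ε)(2/ε²)ln(2/δ)`, where `c(λ,α,ε) = max{(1-α)/λ², (α+ε)/(1-λ)²}`, the
probability that `F(F_n^{-1}(αₙ)) ∈ [α, α+ε]` is at least `1 - δ`. -/
theorem finite_sample_coverage
    {Ω : Type*} [MeasurableSpace Ω] (P : Measure Ω) [IsProbabilityMeasure P]
    (n : ℕ) (hn : 0 < n) (ζ : Fin n → Ω → ℝ) (hmeas : ∀ i, Measurable (ζ i))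
    (hindep : iIndepFun ζ P)
    (μ : Measure ℝ) (hident : ∀ i, P.map (ζ i) = μ)
    (F : ℝ → ℝ) (hF : ∀ z, F z = (μ (Set.Iic z)).toReal) (hFcont : Continuous F)
    (δ α ε lam : ℝ) (hδ : δ ∈ Set.Ioo (0 : ℝ) 1) (hα : α ∈ Set.Ioo (0 : ℝ) 1)
    (hε : ε ∈ Set.Ioo 0 (1 - α)) (hlam : lam ∈ Set.Ioo (0 : ℝ) 1)
    (hsample :
      (n : ℝ) ≥ max ((1 - α) / lam ^ 2) ((α + ε) / (1 - lam) ^ 2) * (2 / ε ^ 2) *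
        Real.log (2 / δ)) :
    (P {ω | α ≤ F (empQuantile n (fun i => ζ i ω) (α + lam * ε)) ∧
        F (empQuantile n (fun i => ζ i ω) (α + lam * ε)) ≤ α + ε}).toReal ≥ 1 - δ := by
  have : IsProbabilityMeasure μ :=
    hident ⟨0, hn⟩ ▸ Measure.isProbabilityMeasure_map (hmeas _).aemeasurable
  obtain rfl : F = cdf μ := funext fun z => (hF z).trans (cdf_eq_real μ z).symm
  obtain ⟨hδ0, hδ1⟩ := hδ
  obtain ⟨hα0, hα1⟩ := hα
  obtain ⟨hε0, hε1⟩ := hε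
  obtain ⟨hlam0, hlam1⟩ := hlam
  have hlamε : 0 < lam * ε := mul_pos hlam0 hε0
  have hlamε' : lam * ε < ε := mul_lt_of_lt_one_left hε0 hlam1
  have hlog : 0 ≤ log (2 / δ) := log_nonneg (by rw [le_div_iff₀ hδ0]; linarith)
  have hsample_low : (1 - α) / (α + lam * ε - α) ^ 2 * 2 * log (2 / δ) ≤ n :=
    calc _ = (1 - α) / lam ^ 2 * (2 / ε ^ 2) * log (2 / δ) := by ring
      _ ≤ _ := by gcongr; exact le_max_left _ _
      _ ≤ n := hsample
  have hsample_high : (α + ε) / (α + ε - (α + lam * ε)) ^ 2 * 2 * log (2 / δ) ≤ n :=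
    calc _ = (α + ε) / (1 - lam) ^ 2 * (2 / ε ^ 2) * log (2 / δ) := by
          rw [show α + ε - (α + lam * ε) = (1 - lam) * ε by ring]
          field_simp
      _ ≤ _ := by gcongr; exact le_max_right _ _
      _ ≤ n := hsample
  have hlow := (measureReal_cdf_empQuantile_lt_le hmeas hindep hident hFcont hn ⟨hα0, hα1⟩
    ⟨by linarith, by linarith⟩).trans
    (exp_neg_mul_sq_div_le_half (by linarith) (by linarith) hδ0 hsample_low)
  have hhigh := (measureReal_lt_cdf_empQuantile_le hmeas hindep hident hFcont
    ⟨by linarith, by linarith⟩ (by linarith)).trans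
    (exp_neg_mul_sq_div_le_half (by linarith) (by linarith) hδ0 hsample_high)
  rw [ge_iff_le, ← measureReal_def, ← add_halves δ]
  exact one_sub_add_le_measureReal_and hlow hhigh
end
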